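/- For every two nonempty finite simple graphs G and H, a^*(G ∪ H) = max{a^*(G), a^*(H)}, where G ∪ H denotes the disjoint union, a(K) = max{|U|/(|U|+|N_K(U)|) : U a nonempty independent set of K}, and a^*(K) = a(K) if a(K) ≤ 1/2, else 1. -/

import Mathlib

open scoped Classical
open Filter

/-- Categorical (tensor) product of two simple graphs. -/
def tensorProd {α β : Type*} (G : SimpleGraph α) (H : SimpleGraph β) :
    SimpleGraph (α × β) where
  Adj p q := G.Adj p.1 q.1 ∧ H.Adj p.2 q.2
  symm := ⟨fun p q h => ⟨h.1.symm, h.2.symm⟩⟩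
  loopless := ⟨fun p h => G.irrefl h.1⟩

/-- A finset is independent. -/
def IsIndep {α : Type*} (G : SimpleGraph α) (U : Finset α) : Prop :=
  ∀ u ∈ U, ∀ v ∈ U, ¬ G.Adj u v

/-- Neighborhood of a finset. -/
noncomputable def nbhd {α : Type*} [Fintype α] (G : SimpleGraph α) (U : Finset α) : Finset α :=
  Finset.univ.filter (fun v => ∃ u ∈ U, G.Adj u v)

/-- Independence number. -/
noncomputable def alphaNum {α : Type*} [Fintype α] (G : SimpleGraph α) : ℕ :=
  sSup {n : ℕ | ∃ U : Finset α, IsIndep G U ∧ U.card = n}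

/-- Independence ratio. -/
noncomputable def iRatio {α : Type*} [Fintype α] (G : SimpleGraph α) : ℝ :=
  (alphaNum G : ℝ) / (Fintype.card α : ℝ)

/-- a(G): the maximum of |U|/(|U|+|N(U)|) over nonempty independent sets. -/
noncomputable def aRatio {α : Type*} [Fintype α] (G : SimpleGraph α) : ℝ :=
  sSup {r : ℝ | ∃ U : Finset α, U.Nonempty ∧ IsIndep G U ∧
    r = (U.card : ℝ) / ((U.card : ℝ) + ((nbhd G U).card : ℝ))}

/-- b(G): the minimum of |N(U)|/|U| over nonempty independent sets. -/
noncomputable def bRatio {α : Type*} [Fintype α] (G : SimpleGraph α) : ℝ :=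
  sInf {r : ℝ | ∃ U : Finset α, U.Nonempty ∧ IsIndep G U ∧
    r = ((nbhd G U).card : ℝ) / (U.card : ℝ)}

/-- a*(G). -/
noncomputable def aStar {α : Type*} [Fintype α] (G : SimpleGraph α) : ℝ :=
  if aRatio G ≤ 1/2 then aRatio G else 1

/-- k-th categorical power of G. -/
def tensorPow {α : Type*} (G : SimpleGraph α) (k : ℕ) : SimpleGraph (Fin k → α) where
  Adj x y := x ≠ y ∧ ∀ i, G.Adj (x i) (y i)
  symm := ⟨fun x y h => ⟨h.1.symm, fun i => (h.2 i).symm⟩⟩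
  loopless := ⟨fun x h => h.1 rfl⟩

/-- Disjoint union of two simple graphs. -/
def disjUnion {α β : Type*} (G : SimpleGraph α) (H : SimpleGraph β) :
    SimpleGraph (α ⊕ β) where
  Adj p q := match p, q with
    | Sum.inl a, Sum.inl b => G.Adj a b
    | Sum.inr a, Sum.inr b => H.Adj a b
    | _, _ => False
  symm := ⟨by rintro (a|a) (b|b) h <;> simp_all <;> exact h.symm⟩
  loopless := ⟨by rintro (a|a) h <;> simp_all⟩


/-!
An independent set `U` of `G ∪ H` splits into independent sets `A` of `G` and `B` of `H`, and
`N(U)` splits accordingly, so the ratio of `U` is the mediant of the ratios of `A` and `B`; hence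
`a(G ∪ H) = max {a(G), a(H)}`. Since `x ↦ if x ≤ 1/2 then x else 1` is monotone, it commutes
with `max`.
-/

open Finset

lemma ratio_le_one {α : Type*} (U : Finset α) (N : ℕ) : (#U : ℝ) / (#U + N) ≤ 1 :=
  div_le_one_of_le₀ (by simp) (by positivity)

section Ratio

variable {α : Type*} [Fintype α] {G : SimpleGraph α} {U : Finset α}

lemma nbhd_empty (G : SimpleGraph α) : nbhd G ∅ = ∅ := by
  simp [nbhd]

lemma le_aRatio (hU : U.Nonempty) (hI : IsIndep G U) :
    (#U : ℝ) / (#U + #(nbhd G U)) ≤ aRatio G :=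
  le_csSup ⟨1, by rintro _ ⟨V, -, -, rfl⟩; exact ratio_le_one V _⟩ ⟨U, hU, hI, rfl⟩

lemma aRatio_le {M : ℝ} (hM : 0 ≤ M)
    (h : ∀ U : Finset α, U.Nonempty → IsIndep G U → (#U : ℝ) / (#U + #(nbhd G U)) ≤ M) :
    aRatio G ≤ M :=
  Real.sSup_le (by rintro _ ⟨U, hU, hI, rfl⟩; exact h U hU hI) hM

-- Also for a graph without vertices, where `aRatio` is the junk value `sSup ∅ = 0`.
lemma aRatio_nonneg (G : SimpleGraph α) : 0 ≤ aRatio G :=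
  Real.sSup_nonneg (by rintro _ ⟨U, -, -, rfl⟩; positivity)

lemma card_le_aRatio_mul (hI : IsIndep G U) :
    (#U : ℝ) ≤ aRatio G * (#U + #(nbhd G U)) := by
  rcases U.eq_empty_or_nonempty with rfl | hU
  · simp [nbhd_empty]
  · have hpos : (0 : ℝ) < #U + #(nbhd G U) := by
      have : (0 : ℝ) < #U := by exact_mod_cast hU.card_pos
      positivity
    exact (div_le_iff₀ hpos).1 (le_aRatio hU hI)

end Ratio

section DisjUnion

variable {α β : Type*} (G : SimpleGraph α) (H : SimpleGraph β)

lemma isIndep_disjUnion_iff {U : Finset (α ⊕ β)} :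
    IsIndep (disjUnion G H) U ↔ IsIndep G U.toLeft ∧ IsIndep H U.toRight := by
  constructor
  · intro h
    exact ⟨fun u hu v hv => h _ (mem_toLeft.1 hu) _ (mem_toLeft.1 hv),
      fun u hu v hv => h _ (mem_toRight.1 hu) _ (mem_toRight.1 hv)⟩
  · rintro ⟨hG, hH⟩ (u | u) hu (v | v) hv
    exacts [hG u (mem_toLeft.2 hu) v (mem_toLeft.2 hv), id, id,
      hH u (mem_toRight.2 hu) v (mem_toRight.2 hv)]

variable [Fintype α] [Fintype β]

lemma toLeft_nbhd_disjUnion (U : Finset (α ⊕ β)) :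
    (nbhd (disjUnion G H) U).toLeft = nbhd G U.toLeft := by
  ext x
  simp only [mem_toLeft, nbhd, mem_filter, mem_univ, true_and, Sum.exists]
  simp [_root_.disjUnion]

lemma toRight_nbhd_disjUnion (U : Finset (α ⊕ β)) :
    (nbhd (disjUnion G H) U).toRight = nbhd H U.toRight := by
  ext x
  simp only [mem_toRight, nbhd, mem_filter, mem_univ, true_and, Sum.exists]
  simp [_root_.disjUnion]

lemma card_nbhd_disjUnion (U : Finset (α ⊕ β)) :
    #(nbhd (disjUnion G H) U) = #(nbhd G U.toLeft) + #(nbhd H U.toRight) := by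
  rw [← card_toLeft_add_card_toRight, toLeft_nbhd_disjUnion, toRight_nbhd_disjUnion]

lemma aRatio_disjUnion_le : aRatio (disjUnion G H) ≤ max (aRatio G) (aRatio H) := by
  set M := max (aRatio G) (aRatio H)
  have hM : 0 ≤ M := (aRatio_nonneg G).trans (le_max_left _ _)
  refine aRatio_le hM fun U _ hI => div_le_of_le_mul₀ (by positivity) hM ?_
  obtain ⟨hIG, hIH⟩ := (isIndep_disjUnion_iff G H).1 hI
  have hG := (card_le_aRatio_mul hIG).trans
    (mul_le_mul_of_nonneg_right (le_max_left _ _) (by positivity) : _ ≤ M * _)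
  have hH := (card_le_aRatio_mul hIH).trans
    (mul_le_mul_of_nonneg_right (le_max_right _ _) (by positivity) : _ ≤ M * _)
  rw [card_nbhd_disjUnion, ← card_toLeft_add_card_toRight]
  push_cast
  linarith

lemma ratio_disjSum_le_aRatio {A : Finset α} {B : Finset β} (h : (A.disjSum B).Nonempty)
    (hA : IsIndep G A) (hB : IsIndep H B) :
    (#A + #B : ℝ) / ((#A + #(nbhd G A)) + (#B + #(nbhd H B))) ≤ aRatio (disjUnion G H) := by
  have hI : IsIndep (disjUnion G H) (A.disjSum B) := by
    rw [isIndep_disjUnion_iff, toLeft_disjSum, toRight_disjSum]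
    exact ⟨hA, hB⟩
  refine Eq.trans_le ?_ (le_aRatio h hI)
  rw [card_nbhd_disjUnion, card_disjSum, toLeft_disjSum, toRight_disjSum]
  push_cast
  ring

lemma aRatio_left_le_aRatio_disjUnion : aRatio G ≤ aRatio (disjUnion G H) :=
  aRatio_le (aRatio_nonneg _) fun U hU hI => by
    simpa [nbhd_empty] using ratio_disjSum_le_aRatio G H (B := ∅)
      (by simpa [nonempty_iff_ne_empty, disjSum_eq_empty] using hU) hI (by simp [IsIndep])

lemma aRatio_right_le_aRatio_disjUnion : aRatio H ≤ aRatio (disjUnion G H) :=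
  aRatio_le (aRatio_nonneg _) fun U hU hI => by
    simpa [nbhd_empty] using ratio_disjSum_le_aRatio G H (A := ∅)
      (by simpa [nonempty_iff_ne_empty, disjSum_eq_empty] using hU) (by simp [IsIndep]) hI

lemma aRatio_disjUnion : aRatio (disjUnion G H) = max (aRatio G) (aRatio H) :=
  (aRatio_disjUnion_le G H).antisymm
    (max_le (aRatio_left_le_aRatio_disjUnion G H) (aRatio_right_le_aRatio_disjUnion G H))

end DisjUnion

lemma monotone_aStar_cutoff : Monotone fun x : ℝ => if x ≤ 1 / 2 then x else 1 := by
  intro x y hxy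
  dsimp only
  split_ifs <;> linarith

theorem stmt14_general {α β : Type*} [Fintype α] [Fintype β]
    (G : SimpleGraph α) (H : SimpleGraph β) :
    aStar (disjUnion G H) = max (aStar G) (aStar H) := by
  simp only [aStar, aRatio_disjUnion]
  exact monotone_aStar_cutoff.map_max

theorem stmt14 {α β : Type*} [Fintype α] [Fintype β] [Nonempty α] [Nonempty β]
    (G : SimpleGraph α) (H : SimpleGraph β) :
    aStar (disjUnion G H) = max (aStar G) (aStar H) :=
  stmt14_general G H
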